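/- Let q ≥ 2 be an integer and let B = (b₁,…,bₙ) be an LLL-reduced basis of a lattice ℒ with all entries of B lying in (1/q)ℤ. Then for every j, ‖b_j‖ ≤ q^{n−1} · 2^{n²/4} · det(ℒ). In particular, all entries of B lie in [−p/q, p/q] with p ≤ (2^{n/4} q)^n · det(ℒ). -/

import Mathlib

open scoped RealInnerProductSpace BigOperators

noncomputable section

/-- The set of integer linear combinations of `B 0, …, B (n-1)`. -/
def zspan {d n : ℕ} (B : Fin n → EuclideanSpace ℝ (Fin d)) : Set (EuclideanSpace ℝ (Fin d)) :=
  {x | ∃ c : Fin n → ℤ, x = ∑ i, (c i : ℝ) • B i}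

/-- `L` is a lattice of rank `n`: the ℤ-span of `n` ℝ-linearly independent vectors. -/
def IsLattice {d : ℕ} (L : Set (EuclideanSpace ℝ (Fin d))) (n : ℕ) : Prop :=
  ∃ B : Fin n → EuclideanSpace ℝ (Fin d), LinearIndependent ℝ B ∧ L = zspan B

/-- The dual set `S* := {w ∈ span_ℝ S : ⟨w,y⟩ ∈ ℤ for all y ∈ S}`. -/
def dualSet {d : ℕ} (S : Set (EuclideanSpace ℝ (Fin d))) : Set (EuclideanSpace ℝ (Fin d)) :=
  {w | w ∈ Submodule.span ℝ S ∧ ∀ y ∈ S, ∃ m : ℤ, ⟪w, y⟫ = (m : ℝ)}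

/-- Orthogonal projection onto the orthogonal complement of `span_ℝ S`. -/
def projPerp {d : ℕ} (S : Set (EuclideanSpace ℝ (Fin d))) (x : EuclideanSpace ℝ (Fin d)) : EuclideanSpace ℝ (Fin d) :=
  (Submodule.orthogonalProjectionOnto (Submodule.span ℝ S)ᗮ x : EuclideanSpace ℝ (Fin d))

/-- `det(ℒ) = √(det(BᵀB))`, computed from a basis `B` via its Gram matrix. -/
def gramDet {d n : ℕ} (B : Fin n → EuclideanSpace ℝ (Fin d)) : ℝ :=
  Real.sqrt (Matrix.det (Matrix.of fun i j => ⟪B i, B j⟫))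

/-- The Gram–Schmidt orthogonalization `b̃ᵢ = Π_{{b₁,…,b_(i-1)}^⊥}(bᵢ)`. -/
def gsVec {d n : ℕ} (B : Fin n → EuclideanSpace ℝ (Fin d)) (i : Fin n) : EuclideanSpace ℝ (Fin d) :=
  projPerp (B '' {j | j < i}) (B i)

/-- The Gram–Schmidt coefficients `μ_(i,j) = ⟨b̃ᵢ, bⱼ⟩ / ‖b̃ᵢ‖²`. -/
def mu {d n : ℕ} (B : Fin n → EuclideanSpace ℝ (Fin d)) (i j : Fin n) : ℝ :=
  ⟪gsVec B i, B j⟫ / ‖gsVec B i‖ ^ 2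

/-- `B` is an LLL-reduced basis (with parameter δ = 3/4). -/
def IsLLLReduced {d n : ℕ} (B : Fin n → EuclideanSpace ℝ (Fin d)) : Prop :=
  LinearIndependent ℝ B ∧
  (∀ i j : Fin n, i < j → |mu B i j| ≤ 1 / 2) ∧
  (∀ (i : ℕ) (h : i + 1 < n),
    (3 / 4) * ‖gsVec B ⟨i, Nat.lt_of_succ_lt h⟩‖ ^ 2 ≤
      ‖gsVec B ⟨i + 1, h⟩‖ ^ 2 +
        (mu B ⟨i, Nat.lt_of_succ_lt h⟩ ⟨i + 1, h⟩) ^ 2 * ‖gsVec B ⟨i, Nat.lt_of_succ_lt h⟩‖ ^ 2)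

/-!
Write `b̃ⱼ` for the Gram–Schmidt vectors. Since `bⱼ = b̃ⱼ + ∑_{k<j} μ_{k,j} b̃ₖ`, the Gram matrix
factors as `MᵀDM` with `M` unitriangular and `D = diag ‖b̃ₖ‖²`; hence `det(ℒ) = ∏ ‖b̃ₖ‖` and
`‖bⱼ‖² = ‖b̃ⱼ‖² + ∑_{k<j} μ_{k,j}² ‖b̃ₖ‖²`. The Lovász condition gives `‖b̃ₖ‖² ≤ 2^(j-k) ‖b̃ⱼ‖²`,
and with `μ² ≤ 1/4` this yields `‖bⱼ‖² ≤ 2^j ‖b̃ⱼ‖²`, so `∏ ‖bⱼ‖ ≤ 2^(n(n-1)/4) det(ℒ)`.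
A nonzero vector with entries in `(1/q)ℤ` has norm at least `1/q`, so dividing by the other
`n - 1` factors of the product bounds each `‖bⱼ‖`, and every entry is bounded by its row's norm.
-/

open Finset InnerProductSpace Matrix Submodule

theorem sum_eq_add_sum_Iio_of_eq_zero {ι M : Type*} [LinearOrder ι] [LocallyFiniteOrderBot ι]
    [Fintype ι] [AddCommMonoid M] {g : ι → M} (j : ι) (hg : ∀ k, j < k → g k = 0) :
    ∑ k, g k = g j + ∑ k ∈ Iio j, g k := by
  rw [← sum_subset (subset_univ (Iic j)) fun k _ hk => hg k (not_le.1 (by simpa using hk)),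
    ← Iio_insert, sum_insert notMem_Iio_self]

theorem sum_Iio_le_of_le_two_mul {n : ℕ} (x : Fin n → ℝ)
    (hx : ∀ (i : ℕ) (h : i + 1 < n), x ⟨i, Nat.lt_of_succ_lt h⟩ ≤ 2 * x ⟨i + 1, h⟩) (j : Fin n) :
    ∑ k ∈ Iio j, x k ≤ (2 ^ ((j : ℕ) + 1) - 2) * x j := by
  obtain ⟨j, hj⟩ := j
  induction j with
  | zero =>
    have hIio : Iio (⟨0, hj⟩ : Fin n) = ∅ := by ext k; simp [Fin.lt_def]
    simp [hIio]
  | succ j ih =>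
    have hIio : Iio (⟨j + 1, hj⟩ : Fin n) = Iic ⟨j, by omega⟩ := by
      ext k; simp [Fin.lt_def, Fin.le_def]
    rw [hIio, ← sum_Iio_add_eq_sum_Iic]
    calc _ ≤ (2 ^ (j + 1) - 1) * x ⟨j, by omega⟩ := by linarith [ih (by omega)]
      _ ≤ (2 ^ (j + 1) - 1) * (2 * x ⟨j + 1, hj⟩) := by
        gcongr
        · linarith [one_le_pow₀ (M₀ := ℝ) (n := j + 1) one_le_two]
        · exact hx j hj
      _ = _ := by ring

theorem le_pow_mul_prod_of_inv_le {ι : Type*} [Fintype ι] {a : ι → ℝ} {q : ℝ} (hq : 0 < q)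
    (ha : ∀ i, q⁻¹ ≤ a i) (j : ι) : a j ≤ q ^ (Fintype.card ι - 1) * ∏ i, a i := by
  classical
  have hrest : q⁻¹ ^ (Fintype.card ι - 1) ≤ ∏ i ∈ univ.erase j, a i := by
    simpa [card_erase_of_mem] using
      prod_le_prod (s := univ.erase j) (fun _ _ => (inv_pos.2 hq).le) fun i _ => ha i
  have haj : 0 ≤ a j := (inv_pos.2 hq).le.trans (ha j)
  calc a j = q ^ (Fintype.card ι - 1) * (q⁻¹ ^ (Fintype.card ι - 1) * a j) := by
        rw [← mul_assoc, ← mul_pow, mul_inv_cancel₀ hq.ne', one_pow, one_mul]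
    _ ≤ q ^ (Fintype.card ι - 1) * ((∏ i ∈ univ.erase j, a i) * a j) := by gcongr
    _ = q ^ (Fintype.card ι - 1) * ∏ i, a i := by rw [prod_erase_mul _ _ (mem_univ j)]

theorem inv_le_norm_of_eq_intCast_div {ι : Type*} [Fintype ι] {q : ℝ} (hq : 0 < q)
    {x : EuclideanSpace ℝ ι} (hx : x ≠ 0) (hent : ∀ i, ∃ m : ℤ, x i = m / q) : q⁻¹ ≤ ‖x‖ := by
  obtain ⟨i, hi⟩ : ∃ i, x i ≠ 0 := by
    by_contra! h
    exact hx (PiLp.ext h)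
  obtain ⟨m, hm⟩ := hent i
  have hm0 : m ≠ 0 := by rintro rfl; simp [hm] at hi
  calc q⁻¹ ≤ |(m : ℝ)| / q := by
        rw [inv_eq_one_div]
        gcongr
        exact_mod_cast Int.one_le_abs hm0
    _ = ‖x i‖ := by rw [hm, Real.norm_eq_abs, abs_div, abs_of_pos hq]
    _ ≤ ‖x‖ := PiLp.norm_apply_le x i

section GramSchmidt

variable {ι E : Type*} [NormedAddCommGroup E] [InnerProductSpace ℝ E]

theorem gram_sum_smul [Fintype ι] (v : ι → E) (M : Matrix ι ι ℝ) :
    gram ℝ (fun j => ∑ k, M k j • v k) = Mᵀ * gram ℝ v * M := by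
  ext i j
  simp only [gram_apply, sum_inner, inner_sum, real_inner_smul_left, real_inner_smul_right,
    mul_apply, transpose_apply, sum_mul]
  exact sum_congr rfl fun k _ => sum_congr rfl fun l _ => by ring

variable [LinearOrder ι] [LocallyFiniteOrderBot ι] [WellFoundedLT ι]

/-- The diagonal is set to `1` so that `f j = ∑ k, gramSchmidtCoeff f k j • gramSchmidt ℝ f k`
holds even when `f` is linearly dependent. -/
def gramSchmidtCoeff (f : ι → E) : Matrix ι ι ℝ :=
  of fun k j => if k = j then 1 else ⟪gramSchmidt ℝ f k, f j⟫ / ‖gramSchmidt ℝ f k‖ ^ 2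

variable (f : ι → E)

@[simp]
theorem gramSchmidtCoeff_self (j : ι) : gramSchmidtCoeff f j j = 1 := if_pos rfl

theorem gramSchmidtCoeff_of_lt {j k : ι} (h : j < k) : gramSchmidtCoeff f k j = 0 := by
  simp [gramSchmidtCoeff, h.ne', gramSchmidt_inv_triangular ℝ f h]

theorem gramSchmidtCoeff_isUpperTriangular : (gramSchmidtCoeff f).IsUpperTriangular :=
  fun _ _ h => gramSchmidtCoeff_of_lt f h

theorem eq_gramSchmidt_add_sum (j : ι) :
    f j = gramSchmidt ℝ f j + ∑ k ∈ Iio j, gramSchmidtCoeff f k j • gramSchmidt ℝ f k := by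
  conv_lhs => rw [gramSchmidt_def'' ℝ f j]
  congr 1
  refine sum_congr rfl fun k hk => ?_
  simp [gramSchmidtCoeff, (mem_Iio.1 hk).ne]

theorem gramSchmidt_mem_orthogonal_span_Iio (i : ι) :
    gramSchmidt ℝ f i ∈ (span ℝ (f '' Set.Iio i))ᗮ := by
  rw [← span_gramSchmidt_Iio, ← span_singleton_le_iff_mem, ← isOrtho_iff_le, isOrtho_span]
  rintro _ rfl _ ⟨k, hk, rfl⟩
  exact gramSchmidt_orthogonal ℝ f (ne_of_gt hk)

theorem sub_gramSchmidt_mem_span_Iio (i : ι) :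
    f i - gramSchmidt ℝ f i ∈ span ℝ (f '' Set.Iio i) := by
  rw [← span_gramSchmidt_Iio, gramSchmidt_def ℝ f i, sub_sub_cancel]
  refine sum_mem fun k hk => ?_
  have hk' : gramSchmidt ℝ f k ∈ gramSchmidt ℝ f '' Set.Iio i :=
    Set.mem_image_of_mem _ (mem_Iio.1 hk)
  exact span_mono (Set.singleton_subset_iff.2 hk')
    ((ℝ ∙ gramSchmidt ℝ f k).starProjection_apply_mem (f i))

theorem gram_gramSchmidt :
    gram ℝ (gramSchmidt ℝ f) = diagonal fun k => ‖gramSchmidt ℝ f k‖ ^ 2 := by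
  ext i j
  by_cases h : i = j
  · subst h; simp [gram_apply]
  · simp [gram_apply, h, gramSchmidt_orthogonal ℝ f h]

variable [Fintype ι]

theorem sum_gramSchmidtCoeff_smul (j : ι) :
    ∑ k, gramSchmidtCoeff f k j • gramSchmidt ℝ f k = f j := by
  rw [sum_eq_add_sum_Iio_of_eq_zero j fun k hk => by rw [gramSchmidtCoeff_of_lt f hk, zero_smul],
    gramSchmidtCoeff_self, one_smul, ← eq_gramSchmidt_add_sum]

theorem gram_eq_transpose_mul_diagonal_mul :
    gram ℝ f = (gramSchmidtCoeff f)ᵀ * diagonal (fun k => ‖gramSchmidt ℝ f k‖ ^ 2) *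
      gramSchmidtCoeff f := by
  rw [← gram_gramSchmidt, ← gram_sum_smul]
  simp_rw [sum_gramSchmidtCoeff_smul]

theorem det_gram_eq_prod_norm_gramSchmidt_sq :
    (gram ℝ f).det = ∏ k, ‖gramSchmidt ℝ f k‖ ^ 2 := by
  have hM : (gramSchmidtCoeff f).det = 1 := by
    simp [det_of_isUpperTriangular (gramSchmidtCoeff_isUpperTriangular f)]
  rw [gram_eq_transpose_mul_diagonal_mul, det_mul, det_mul, det_transpose, hM, det_diagonal,
    one_mul, mul_one]

theorem norm_sq_eq_norm_gramSchmidt_sq_add_sum (j : ι) :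
    ‖f j‖ ^ 2 = ‖gramSchmidt ℝ f j‖ ^ 2 +
      ∑ k ∈ Iio j, gramSchmidtCoeff f k j ^ 2 * ‖gramSchmidt ℝ f k‖ ^ 2 := by
  rw [← real_inner_self_eq_norm_sq, ← gram_apply (𝕜 := ℝ), gram_eq_transpose_mul_diagonal_mul,
    mul_apply, sum_eq_add_sum_Iio_of_eq_zero j fun k hk => by
      rw [gramSchmidtCoeff_of_lt f hk, mul_zero]]
  simp only [mul_diagonal, transpose_apply, gramSchmidtCoeff_self, one_mul, mul_one]
  exact congrArg _ (sum_congr rfl fun k _ => by ring)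

end GramSchmidt

section LLL

variable {d n : ℕ} {B : Fin n → EuclideanSpace ℝ (Fin d)}

theorem gsVec_eq_gramSchmidt (B : Fin n → EuclideanSpace ℝ (Fin d)) :
    gsVec B = gramSchmidt ℝ B := by
  funext i
  rw [gsVec, projPerp, ← starProjection_apply]
  exact eq_starProjection_of_mem_orthogonal' (gramSchmidt_mem_orthogonal_span_Iio B i)
    (le_orthogonal_orthogonal _ (sub_gramSchmidt_mem_span_Iio B i)) (add_sub_cancel _ _).symm

theorem mu_eq_gramSchmidtCoeff (B : Fin n → EuclideanSpace ℝ (Fin d)) {i j : Fin n}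
    (h : i ≠ j) : mu B i j = gramSchmidtCoeff B i j := by
  simp [mu, gramSchmidtCoeff, h, gsVec_eq_gramSchmidt]

theorem IsLLLReduced.gramSchmidtCoeff_sq_le (hB : IsLLLReduced B) {k j : Fin n} (h : k < j) :
    gramSchmidtCoeff B k j ^ 2 ≤ 1 / 4 := by
  have hmu := hB.2.1 k j h
  rw [mu_eq_gramSchmidtCoeff B h.ne] at hmu
  nlinarith [abs_le.1 hmu]

theorem IsLLLReduced.norm_gramSchmidt_sq_le (hB : IsLLLReduced B) (i : ℕ) (h : i + 1 < n) :
    ‖gramSchmidt ℝ B ⟨i, Nat.lt_of_succ_lt h⟩‖ ^ 2 ≤ 2 * ‖gramSchmidt ℝ B ⟨i + 1, h⟩‖ ^ 2 := by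
  have hlovasz := hB.2.2 i h
  have hcoeff := hB.gramSchmidtCoeff_sq_le (k := ⟨i, Nat.lt_of_succ_lt h⟩) (j := ⟨i + 1, h⟩)
    (Nat.lt_succ_self i)
  rw [gsVec_eq_gramSchmidt, mu_eq_gramSchmidtCoeff B (by simp)] at hlovasz
  nlinarith [sq_nonneg ‖gramSchmidt ℝ B ⟨i, Nat.lt_of_succ_lt h⟩‖]

theorem IsLLLReduced.norm_sq_le (hB : IsLLLReduced B) (j : Fin n) :
    ‖B j‖ ^ 2 ≤ 2 ^ (j : ℕ) * ‖gramSchmidt ℝ B j‖ ^ 2 := by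
  have hcoeff : ∑ k ∈ Iio j, gramSchmidtCoeff B k j ^ 2 * ‖gramSchmidt ℝ B k‖ ^ 2 ≤
      1 / 4 * ∑ k ∈ Iio j, ‖gramSchmidt ℝ B k‖ ^ 2 := by
    rw [mul_sum]
    exact sum_le_sum fun k hk =>
      mul_le_mul_of_nonneg_right (hB.gramSchmidtCoeff_sq_le (mem_Iio.1 hk)) (by positivity)
  have hdecay :=
    sum_Iio_le_of_le_two_mul (fun k => ‖gramSchmidt ℝ B k‖ ^ 2) hB.norm_gramSchmidt_sq_le j
  have hpow : (1 : ℝ) ≤ 2 ^ (j : ℕ) := one_le_pow₀ one_le_two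
  rw [pow_succ] at hdecay
  rw [norm_sq_eq_norm_gramSchmidt_sq_add_sum]
  nlinarith [mul_nonneg (sub_nonneg.2 hpow) (sq_nonneg ‖gramSchmidt ℝ B j‖)]

theorem IsLLLReduced.prod_norm_le (hB : IsLLLReduced B) :
    ∏ j, ‖B j‖ ≤ 2 ^ ((n : ℝ) ^ 2 / 4) * gramDet B := by
  have hdet : (gram ℝ B).det = ∏ j, ‖gramSchmidt ℝ B j‖ ^ 2 :=
    det_gram_eq_prod_norm_gramSchmidt_sq B
  have hexp : ((∑ j : Fin n, (j : ℕ) : ℕ) : ℝ) ≤ (n : ℝ) ^ 2 / 2 := by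
    have hgauss : (∑ j : Fin n, (j : ℕ)) * 2 ≤ n * n := by
      rw [Fin.sum_univ_eq_sum_range (fun j => j), sum_range_id_mul_two]
      exact Nat.mul_le_mul_left n (Nat.sub_le n 1)
    have : ((∑ j : Fin n, (j : ℕ) : ℕ) : ℝ) * 2 ≤ n * n := by exact_mod_cast hgauss
    nlinarith
  have hsq : (∏ j, ‖B j‖) ^ 2 ≤ (2 ^ ((n : ℝ) ^ 2 / 4) * gramDet B) ^ 2 :=
    calc (∏ j, ‖B j‖) ^ 2 = ∏ j, ‖B j‖ ^ 2 := (prod_pow _ _ _).symm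
      _ ≤ ∏ j : Fin n, (2 ^ (j : ℕ) * ‖gramSchmidt ℝ B j‖ ^ 2) :=
        prod_le_prod (fun _ _ => by positivity) fun j _ => hB.norm_sq_le j
      _ = 2 ^ (∑ j : Fin n, (j : ℕ)) * (gram ℝ B).det := by
        rw [prod_mul_distrib, prod_pow_eq_pow_sum, hdet]
      _ ≤ 2 ^ ((n : ℝ) ^ 2 / 2) * (gram ℝ B).det := by
        gcongr
        · rw [hdet]; positivity
        · rw [← Real.rpow_natCast]
          exact Real.rpow_le_rpow_of_exponent_le one_le_two hexp
      _ = (2 ^ ((n : ℝ) ^ 2 / 4) * gramDet B) ^ 2 := by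
        rw [mul_pow, gramDet, Real.sq_sqrt (hdet ▸ by positivity),
          ← Real.rpow_natCast (2 ^ ((n : ℝ) ^ 2 / 4)) 2, ← Real.rpow_mul zero_le_two]
        congr 2
        push_cast
        ring
  exact (pow_le_pow_iff_left₀ (prod_nonneg fun _ _ => norm_nonneg _)
    (mul_nonneg (by positivity) (Real.sqrt_nonneg _)) two_ne_zero).1 hsq

end LLL

theorem stmt15 {d n : ℕ} (q : ℕ) (hq : 2 ≤ q) (B : Fin n → EuclideanSpace ℝ (Fin d))
    (hB : IsLLLReduced B)
    (hent : ∀ (j : Fin n) (i : Fin d), ∃ m : ℤ, B j i = (m : ℝ) / (q : ℝ)) :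
    (∀ j : Fin n, ‖B j‖ ≤ (q : ℝ) ^ (n - 1) * 2 ^ ((n : ℝ) ^ 2 / 4) * gramDet B) ∧
    ∃ p : ℝ, p ≤ ((2 : ℝ) ^ ((n : ℝ) / 4) * (q : ℝ)) ^ n * gramDet B ∧
      ∀ (j : Fin n) (i : Fin d), |B j i| ≤ p / (q : ℝ) := by
  have hq0 : (0 : ℝ) < q := by exact_mod_cast zero_lt_two.trans_le hq
  have hlow : ∀ j, (q : ℝ)⁻¹ ≤ ‖B j‖ := fun j =>
    inv_le_norm_of_eq_intCast_div hq0 (hB.1.ne_zero j) (hent j)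
  have hnorm : ∀ j, ‖B j‖ ≤ (q : ℝ) ^ (n - 1) * 2 ^ ((n : ℝ) ^ 2 / 4) * gramDet B := fun j =>
    calc ‖B j‖ ≤ (q : ℝ) ^ (n - 1) * ∏ i, ‖B i‖ := by
          simpa using le_pow_mul_prod_of_inv_le hq0 hlow j
      _ ≤ (q : ℝ) ^ (n - 1) * (2 ^ ((n : ℝ) ^ 2 / 4) * gramDet B) := by
          gcongr; exact hB.prod_norm_le
      _ = _ := (mul_assoc _ _ _).symm
  refine ⟨hnorm, _, le_rfl, fun j i => ?_⟩
  have hn : 1 ≤ n := j.pos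
  have hp : ((2 : ℝ) ^ ((n : ℝ) / 4) * q) ^ n * gramDet B / q =
      (q : ℝ) ^ (n - 1) * 2 ^ ((n : ℝ) ^ 2 / 4) * gramDet B := by
    rw [mul_pow, ← Real.rpow_natCast (2 ^ _), ← Real.rpow_mul zero_le_two, pow_sub₀ _ hq0.ne' hn]
    field_simp
  rw [hp]
  exact (PiLp.norm_apply_le (B j) i).trans (hnorm j)
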